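/- If a poset X is complete, then for any Scott-open set U ⊆ X and any maximal chain C ⊆ X, the set C∖U is either empty or has a largest element x = max(C∖U) and coincides with C ∩ ↓x. -/
import Mathlib


/-- `U` is Scott-open: `U = ↑U` and every nonempty up-directed set whose supremum lies in
`U` meets `U`. -/
def ScottOpen (X : Type*) [Preorder X] (U : Set X) : Prop :=
  IsUpperSet U ∧ ∀ D : Set X, D.Nonempty → DirectedOn (· ≤ ·) D →
    ∀ a : X, IsLUB D a → a ∈ U → (D ∩ U).Nonempty

/-- If a poset `X` is complete, then for any Scott-open set `U ⊆ X` and any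
maximal chain `C ⊆ X`, the set `C∖U` is either empty or has a largest element
`x = max (C∖U)` and coincides with `C ∩ ↓x`. -/
theorem stmt6 {X : Type*} [PartialOrder X]
    (hcomp : ∀ C : Set X, C.Nonempty → IsChain (· ≤ ·) C →
      (∃ a : X, IsGLB C a) ∧ (∃ b : X, IsLUB C b))
    (U : Set X) (hU : ScottOpen X U)
    (C : Set X) (hC : IsMaxChain (· ≤ ·) C) :
    C \ U = ∅ ∨ ∃ x : X, IsGreatest (C \ U) x ∧ C \ U = C ∩ Set.Iic x := by
  rcases Set.eq_empty_or_nonempty (C \ U) with h | h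
  · exact Or.inl h
  right
  have hchain : IsChain (· ≤ ·) (C \ U) := hC.1.mono Set.diff_subset
  obtain ⟨-, x, hx⟩ := hcomp (C \ U) h hchain
  have hxC : x ∈ C := by
    have hins : IsChain (· ≤ ·) (insert x C) := by
      apply hC.1.insert
      intro c hcC _
      by_cases hub : ∀ d ∈ C \ U, d ≤ c
      · exact Or.inl (hx.2 hub)
      · push_neg at hub
        obtain ⟨d, hd, hdc⟩ := hub
        rcases hC.1.total hd.1 hcC with h1 | h1
        · exact absurd h1 hdc
        · exact Or.inr (h1.trans (hx.1 hd))
    have := hC.2 hins (Set.subset_insert x C)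
    rw [this]
    exact Set.mem_insert x C
  have hxU : x ∉ U := by
    intro hxU
    obtain ⟨d, hd1, hd2⟩ := hU.2 (C \ U) h hchain.directedOn x hx hxU
    exact hd1.2 hd2
  refine ⟨x, ⟨⟨hxC, hxU⟩, fun d hd => hx.1 hd⟩, ?_⟩
  ext c
  constructor
  · exact fun hc => ⟨hc.1, hx.1 hc⟩
  · rintro ⟨hcC, hcx⟩
    exact ⟨hcC, fun hcU => hxU (hU.1 hcx hcU)⟩
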